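/- Let X : E → E be a C² vector field (ContDiff ℝ 2) and λ : ℝ such that div X (x) = 0 and curl X (x) = λ • X x for all x (X is an eigenvector of the vorticity operator). Then for every x : E, ΔX(x) = −(λ^2) • X x. (The squares of the eigenvalues of rot are eigenvalues of the Laplace operator Δ = rot ∘ rot.) -/

import Mathlib

/-!
For a C² field the symmetry of the second derivative gives `curl (curl X) = ∇(div X) − ΔX`
componentwise. If `div X = 0` and `curl X = λ X`, then `curl (curl X) = λ curl X = λ² X`,
hence `ΔX = −λ² X`.
-/

open MeasureTheory RealInnerProductSpace

noncomputable section

abbrev E : Type := EuclideanSpace ℝ (Fin 3)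

/-- The `i`-th standard basis vector of `E`. -/
def e (i : Fin 3) : E := EuclideanSpace.single i 1

/-- The curl (vorticity) of a vector field on `E`. -/
def curl (X : E → E) (x : E) : E :=
  (WithLp.equiv 2 (Fin 3 → ℝ)).symm
    ![fderiv ℝ X x (e 1) 2 - fderiv ℝ X x (e 2) 1,
      fderiv ℝ X x (e 2) 0 - fderiv ℝ X x (e 0) 2,
      fderiv ℝ X x (e 0) 1 - fderiv ℝ X x (e 1) 0]

/-- The divergence of a vector field on `E`. -/
def div (X : E → E) (x : E) : ℝ := ∑ i, fderiv ℝ X x (e i) i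

/-- The cross product on `E`. -/
def cross (a b : E) : E :=
  (WithLp.equiv 2 (Fin 3 → ℝ)).symm
    ![a 1 * b 2 - a 2 * b 1,
      a 2 * b 0 - a 0 * b 2,
      a 0 * b 1 - a 1 * b 0]

infixl:74 " ×₃ " => cross

/-- The componentwise Laplacian of a vector field on `E`. -/
def lap (X : E → E) (x : E) : E :=
  (WithLp.equiv 2 (Fin 3 → ℝ)).symm
    (fun i => ∑ j, fderiv ℝ (fun y => fderiv ℝ X y (e j)) x (e j) i)

def curlCLM : (E →L[ℝ] E) →L[ℝ] E :=
  LinearMap.toContinuousLinearMap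
    { toFun := fun A => (WithLp.equiv 2 (Fin 3 → ℝ)).symm
        ![A (e 1) 2 - A (e 2) 1, A (e 2) 0 - A (e 0) 2, A (e 0) 1 - A (e 1) 0]
      map_add' := fun A B => by
        ext i
        fin_cases i <;> simp only [add_apply, PiLp.add_apply, WithLp.equiv_symm_apply,
          Fin.reduceFinMk, Matrix.cons_val] <;> ring
      map_smul' := fun c A => by
        ext i
        fin_cases i <;> simp only [smul_apply, PiLp.smul_apply, smul_eq_mul, WithLp.equiv_symm_apply,
          Fin.reduceFinMk, Matrix.cons_val, Real.ringHom_apply] <;> ring }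

def divCLM : (E →L[ℝ] E) →L[ℝ] ℝ :=
  ∑ i, (EuclideanSpace.proj i : E →L[ℝ] ℝ).comp (ContinuousLinearMap.apply ℝ E (e i))

lemma curl_eq_curlCLM_comp_fderiv (X : E → E) : curl X = curlCLM ∘ fderiv ℝ X := rfl

lemma div_eq_divCLM_comp_fderiv (X : E → E) : div X = divCLM ∘ fderiv ℝ X := by
  ext x; simp [div, divCLM]

lemma curlCLM_curlCLM_comp {H : E →L[ℝ] E →L[ℝ] E} (hH : ∀ u v, H u v = H v u) (i : Fin 3) :
    curlCLM (curlCLM.comp H) i = divCLM (H (e i)) - ∑ j, H (e j) (e j) i := by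
  have hH' (u v : E) (k : Fin 3) : H u v k = H v u k := by rw [hH]
  fin_cases i <;>
    simp only [curlCLM, divCLM, LinearMap.coe_toContinuousLinearMap', LinearMap.coe_mk,
      AddHom.coe_mk, ContinuousLinearMap.comp_apply, WithLp.equiv_symm_apply, Fin.reduceFinMk,
      Matrix.cons_val, Fin.sum_univ_three, add_apply, ContinuousLinearMap.apply_apply,
      PiLp.proj_apply]
  · linear_combination hH' (e 1) (e 0) 1 + hH' (e 2) (e 0) 2
  · linear_combination hH' (e 0) (e 1) 0 + hH' (e 2) (e 1) 2
  · linear_combination hH' (e 0) (e 2) 0 + hH' (e 1) (e 2) 1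

section Derivatives

variable {X : E → E} {x : E}

lemma fderiv_curl (h : DifferentiableAt ℝ (fderiv ℝ X) x) :
    fderiv ℝ (curl X) x = curlCLM.comp (fderiv ℝ (fderiv ℝ X) x) := by
  rw [curl_eq_curlCLM_comp_fderiv]
  exact (curlCLM.hasFDerivAt.comp x h.hasFDerivAt).fderiv

lemma fderiv_div (h : DifferentiableAt ℝ (fderiv ℝ X) x) :
    fderiv ℝ (div X) x = divCLM.comp (fderiv ℝ (fderiv ℝ X) x) := by
  rw [div_eq_divCLM_comp_fderiv]
  exact (divCLM.hasFDerivAt.comp x h.hasFDerivAt).fderiv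

lemma lap_apply (h : DifferentiableAt ℝ (fderiv ℝ X) x) (i : Fin 3) :
    lap X x i = ∑ j, fderiv ℝ (fderiv ℝ X) x (e j) (e j) i := by
  have hdir (j : Fin 3) : fderiv ℝ (fun y => fderiv ℝ X y (e j)) x
      = (ContinuousLinearMap.apply ℝ E (e j)).comp (fderiv ℝ (fderiv ℝ X) x) :=
    ((ContinuousLinearMap.apply ℝ E (e j)).hasFDerivAt.comp x h.hasFDerivAt).fderiv
  simp [lap, hdir]

lemma curl_const_smul (h : DifferentiableAt ℝ X x) (c : ℝ) :
    curl (c • X) x = c • curl X x := by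
  simp only [curl_eq_curlCLM_comp_fderiv, Function.comp_apply]
  rw [← map_smul, ← fderiv_const_smul h]

lemma curl_curl_apply (hX : ContDiffAt ℝ 2 X x) (i : Fin 3) :
    curl (curl X) x i = fderiv ℝ (div X) x (e i) - lap X x i := by
  have hD : DifferentiableAt ℝ (fderiv ℝ X) x :=
    (hX.fderiv_right (m := 1) (by norm_num)).differentiableAt (by norm_num)
  have hsymm : IsSymmSndFDerivAt ℝ X x := hX.isSymmSndFDerivAt (by simp)
  rw [curl_eq_curlCLM_comp_fderiv (curl X), Function.comp_apply, fderiv_curl hD, lap_apply hD,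
    fderiv_div hD, ContinuousLinearMap.comp_apply]
  exact curlCLM_curlCLM_comp hsymm i

end Derivatives

theorem laplacian_of_curl_eigenvector (X : E → E) (lam : ℝ) (hX : ContDiff ℝ 2 X)
    (hdiv : ∀ x, div X x = 0) (hcurl : ∀ x, curl X x = lam • X x) (x : E) :
    lap X x = -(lam^2) • X x := by
  have hdiv' : div X = 0 := funext hdiv
  have hcurl' : curl X = lam • X := funext hcurl
  have hcurlcurl : curl (curl X) x = (lam ^ 2) • X x := by
    rw [hcurl', curl_const_smul (hX.differentiable (by norm_num) x), hcurl x, smul_smul, sq]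
  ext i
  have key := curl_curl_apply (hX.contDiffAt (x := x)) i
  rw [hdiv', hcurlcurl] at key
  simp only [PiLp.smul_apply, smul_eq_mul, fderiv_zero, Pi.zero_apply,
    zero_apply, zero_sub, neg_smul, PiLp.neg_apply] at key ⊢
  linarith
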